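/- arXiv:1507.01089 — 2 statements merged into one kernel-verified Lean document; each statement's English description precedes it below -/
import Mathlib

section
/- The φ-shuffle product ⧢_φ is dualizable (i.e., there exists a linear coproduct Δ : K⟨Y⟩ → K⟨Y⟩ ⊗ K⟨Y⟩ with ⟨u ⧢_φ v, w⟩ = ⟨u ⊗ v, Δ(w)⟩ for all words u,v,w) if and only if for every letter z ∈ Y, the set {(x,y) ∈ Y² : γ^z_{x,y} ≠ 0} is finite, where γ^z_{x,y} = ⟨φ(x,y), z⟩ are the structure constants of φ. -/
noncomputable section

open Finsupp

variable {K : Type*} [CommRing K] [Algebra ℚ K]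
variable {Y : Type*} [DecidableEq Y]

/-- The word `w ∈ Y*` viewed as a basis element of `K⟨Y⟩`. -/
def word (w : List Y) : List Y →₀ K := Finsupp.single w 1

/-- Left concatenation by a letter, as a linear endomorphism of `K⟨Y⟩`. -/
def consL (a : Y) : (List Y →₀ K) →ₗ[K] (List Y →₀ K) :=
  Finsupp.lmapDomain K K (List.cons a)

/-- `m` is the `φ`-deformed shuffle product: it satisfies the initialization
`1 ⧢ w = w ⧢ 1 = w` and the recursion
`(au) ⧢ (bv) = a (u ⧢ bv) + b (au ⧢ v) + φ(a,b)(u ⧢ v)`. -/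
def IsPhiShuffle (φ : Y → Y → (Y →₀ K))
    (m : (List Y →₀ K) →ₗ[K] (List Y →₀ K) →ₗ[K] (List Y →₀ K)) : Prop :=
  (∀ w : List Y, m (word []) (word w) = word w) ∧
  (∀ w : List Y, m (word w) (word []) = word w) ∧
  ∀ (a b : Y) (u v : List Y),
    m (word (a :: u)) (word (b :: v)) =
      consL a (m (word u) (word (b :: v))) + consL b (m (word (a :: u)) (word v)) +
      (φ a b).sum fun c k => k • consL c (m (word u) (word v))

/-- Bilinear extension of `φ` to `KY`. -/
def phiExt (φ : Y → Y → (Y →₀ K)) (p q : Y →₀ K) : Y →₀ K :=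
  p.sum fun a ka => q.sum fun b kb => (ka * kb) • φ a b

/-- The extension of `φ` to `KY ⊗ KY → KY` is associative. -/
def PhiAssoc (φ : Y → Y → (Y →₀ K)) : Prop :=
  ∀ a b c : Y, phiExt φ (φ a b) (Finsupp.single c 1) = phiExt φ (Finsupp.single a 1) (φ b c)

/-- The extension of `φ` is commutative. -/
def PhiComm (φ : Y → Y → (Y →₀ K)) : Prop := ∀ a b : Y, φ a b = φ b a

/-- `φ` is dualizable: for every letter `z` only finitely many pairs of letters
have `z` in the support of their `φ`-product. -/
def PhiDualizable (φ : Y → Y → (Y →₀ K)) : Prop :=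
  ∀ z : Y, {p : Y × Y | φ p.1 p.2 z ≠ 0}.Finite

/-- Extension of an associative `φ` to nonempty words: `φ(xw) = φ(x, φ(w))`. -/
def phiWord (φ : Y → Y → (Y →₀ K)) : List Y → (Y →₀ K)
  | [] => 0
  | [x] => Finsupp.single x 1
  | x :: y :: w => (phiWord φ (y :: w)).sum fun b k => k • φ x b

/-- `φ` is moderate: for every letter `y`, only finitely many nonempty words `w`
satisfy `⟨y, φ(w)⟩ ≠ 0`. -/
def PhiModerate (φ : Y → Y → (Y →₀ K)) : Prop :=
  ∀ y : Y, {w : List Y | w ≠ [] ∧ phiWord φ w y ≠ 0}.Finite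

/-- Pairing of two polynomials (the words form an orthonormal basis). -/
def pairPP (p q : List Y →₀ K) : K := p.sum fun w a => a * q w

/-- Pairing `⟨S, p⟩` of a series with a polynomial. -/
def pairPS (S : List Y → K) (p : List Y →₀ K) : K := p.sum fun w a => a * S w

/-- Concatenation product on `K⟨Y⟩`. -/
def concP (p q : List Y →₀ K) : List Y →₀ K :=
  p.sum fun u a => q.sum fun v b => Finsupp.single (u ++ v) (a * b)

/-- Concatenation powers. -/
def concPow (p : List Y →₀ K) : ℕ → (List Y →₀ K)
  | 0 => word []
  | n + 1 => concP p (concPow p n)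

/-- Powers with respect to a bilinear product `m`. -/
def mpow (m : (List Y →₀ K) →ₗ[K] (List Y →₀ K) →ₗ[K] (List Y →₀ K))
    (p : List Y →₀ K) : ℕ → (List Y →₀ K)
  | 0 => word []
  | n + 1 => m p (mpow m p n)

/-- `m`-product of a list of polynomials. -/
def prodM (m : (List Y →₀ K) →ₗ[K] (List Y →₀ K) →ₗ[K] (List Y →₀ K))
    (L : List (List Y →₀ K)) : List Y →₀ K :=
  L.foldr (fun p acc => m p acc) (word [])

/-- The unit series. -/
def oneS : List Y → K := fun w => if w = [] then 1 else 0

/-- Concatenation (Cauchy) product of series. -/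
def mulS (S T : List Y → K) : List Y → K := fun w =>
  ∑ i ∈ Finset.range (w.length + 1), S (w.take i) * T (w.drop i)

/-- Concatenation powers of a series. -/
def powS (S : List Y → K) : ℕ → (List Y → K)
  | 0 => oneS
  | n + 1 => mulS S (powS S n)

/-- Concatenation product of a list of series. -/
def prodS (L : List (List Y → K)) : List Y → K := L.foldr (fun S acc => mulS S acc) oneS

/-- The coproduct `Δ_{⧢_φ}` dual to `m`, on series: `Δ(S)(u,v) = ⟨S, u ⧢_φ v⟩`. -/
def DeltaS (m : (List Y →₀ K) →ₗ[K] (List Y →₀ K) →ₗ[K] (List Y →₀ K))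
    (S : List Y → K) : List Y × List Y → K :=
  fun p => pairPS S (m (word p.1) (word p.2))

/-- `S` is primitive: `Δ_{⧢_φ}(S) = S ⊗ 1 + 1 ⊗ S`. -/
def PrimS (m : (List Y →₀ K) →ₗ[K] (List Y →₀ K) →ₗ[K] (List Y →₀ K))
    (S : List Y → K) : Prop :=
  ∀ u v : List Y, DeltaS m S (u, v) =
    (if v = [] then S u else 0) + (if u = [] then S v else 0)

/-- `S` is group-like: `⟨S,1⟩ = 1` and `Δ_{⧢_φ}(S) = S ⊗ S`. -/
def GroupLikeS (m : (List Y →₀ K) →ₗ[K] (List Y →₀ K) →ₗ[K] (List Y →₀ K))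
    (S : List Y → K) : Prop :=
  S [] = 1 ∧ ∀ u v : List Y, DeltaS m S (u, v) = S u * S v

/-- `Δfn` is the (finitely supported) dual coproduct witnessing dualizability of `m`:
`⟨u ⧢_φ v, w⟩ = ⟨u ⊗ v, Δ(w)⟩`. -/
def IsDualWitness (m : (List Y →₀ K) →ₗ[K] (List Y →₀ K) →ₗ[K] (List Y →₀ K))
    (Δfn : List Y → (List Y × List Y →₀ K)) : Prop :=
  ∀ u v w : List Y, (m (word u) (word v)) w = Δfn w (u, v)

/-- All factorizations of a word into nonempty blocks. -/
def cuts : List Y → List (List (List Y))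
  | [] => [[]]
  | a :: w =>
    (cuts w).flatMap fun parts =>
      match parts with
      | [] => [[[a]]]
      | p :: ps => [[a] :: p :: ps, (a :: p) :: ps]

/-- The extended Eulerian projector `π₁` on series:
`π₁(S) = Σ_{k≥1} ((-1)^{k-1}/k) Σ_{u_1⋯u_k = w, u_i ∈ Y⁺} ⟨S, u_1 ⧢_φ ⋯ ⧢_φ u_k⟩ w`. -/
def piOneS (m : (List Y →₀ K) →ₗ[K] (List Y →₀ K) →ₗ[K] (List Y →₀ K))
    (S : List Y → K) : List Y → K := fun w =>
  ((cuts w).map fun parts =>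
    algebraMap ℚ K ((-1) ^ (parts.length - 1) / (parts.length : ℚ)) *
      pairPS S (prodM m (parts.map word))).sum

/-- Logarithm of a series `S` with `⟨S,1⟩ = 1`. -/
def logS (S : List Y → K) : List Y → K := fun w =>
  ∑ n ∈ Finset.Icc 1 w.length,
    algebraMap ℚ K ((-1) ^ (n - 1) / (n : ℚ)) * powS (fun t => S t - oneS t) n w

/-- Convolution of endomorphisms (valued in series), using a dual coproduct witness. -/
def convT (Δfn : List Y → (List Y × List Y →₀ K))
    (f g : (List Y →₀ K) → (List Y → K)) : (List Y →₀ K) → (List Y → K) :=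
  fun P w => P.sum fun t a =>
    a * (Δfn t).sum fun p c => c * mulS (f (word p.1)) (g (word p.2)) w

/-- The convolution unit `e = 1 ∘ ε`. -/
def eT : (List Y →₀ K) → (List Y → K) := fun P w => if w = [] then P [] else 0

/-- Convolution powers `π₁^{⋆ n}` of the Eulerian projector. -/
def convPowPi (m : (List Y →₀ K) →ₗ[K] (List Y →₀ K) →ₗ[K] (List Y →₀ K))
    (Δfn : List Y → (List Y × List Y →₀ K)) : ℕ → ((List Y →₀ K) → (List Y → K))
  | 0 => eT
  | n + 1 => convT Δfn (fun P => piOneS m fun t => P t) (convPowPi m Δfn n)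

/-- Lyndon words: nonempty and lexicographically smaller than each proper suffix. -/
def IsLyndon [LinearOrder Y] (w : List Y) : Prop :=
  w ≠ [] ∧ ∀ u v : List Y, u ≠ [] → v ≠ [] → w = u ++ v → List.Lex (· < ·) w v

/-- Strictly decreasing lists of Lyndon words with positive exponents,
indexing monomials in Lyndon words. -/
abbrev DecLyn (Y : Type*) [LinearOrder Y] :=
  {s : List (List Y × ℕ) // (∀ p ∈ s, IsLyndon p.1 ∧ 0 < p.2) ∧
    s.Chain' fun a b => List.Lex (· < ·) b.1 a.1}

/-- `⧢_φ`-monomial `l₁^{⧢ i₁} ⧢ ⋯ ⧢ l_k^{⧢ i_k}`. -/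
def shMonomial (m : (List Y →₀ K) →ₗ[K] (List Y →₀ K) →ₗ[K] (List Y →₀ K))
    (s : List (List Y × ℕ)) : List Y →₀ K :=
  s.foldr (fun p acc => m (mpow m (word p.1) p.2) acc) (word [])

/-- Concatenation monomial `Π_{l₁}^{i₁} ⋯ Π_{l_k}^{i_k}` in a family `Pi`. -/
def concMonomial (Pi : List Y → (List Y →₀ K)) (s : List (List Y × ℕ)) : List Y →₀ K :=
  s.foldr (fun p acc => concP (concPow (Pi p.1) p.2) acc) (word [])

/-- The singleton index `l¹ ∈ DecLyn Y` attached to a Lyndon word. -/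
def singleIdx [LinearOrder Y] (l : List Y) (hl : IsLyndon l) : DecLyn Y :=
  ⟨[(l, 1)], ⟨fun p hp => by
      rw [List.mem_singleton] at hp; subst hp; exact ⟨hl, Nat.one_pos⟩,
    List.isChain_singleton _⟩⟩

/-- `(s, r)` is the standard factorization of the Lyndon word `l`:
`l = sr` with `s, r` nonempty and `r` the lexicographically least proper suffix. -/
def StdFact [LinearOrder Y] (l s r : List Y) : Prop :=
  l = s ++ r ∧ s ≠ [] ∧ r ≠ [] ∧
  ∀ s' r' : List Y, l = s' ++ r' → s' ≠ [] → r' ≠ [] → r = r' ∨ List.Lex (· < ·) r r'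

/-- `Pi` is the family defined by `Π_y = π₁(y)` on letters and
`Π_l = [Π_s, Π_r]` for the standard factorization `(s,r)` of a Lyndon word `l`. -/
def IsPiFamily [LinearOrder Y]
    (m : (List Y →₀ K) →ₗ[K] (List Y →₀ K) →ₗ[K] (List Y →₀ K))
    (Pi : List Y → (List Y →₀ K)) : Prop :=
  (∀ y : Y, ∀ w : List Y, Pi [y] w = piOneS m (fun t => (word [y] : List Y →₀ K) t) w) ∧
  ∀ l s r : List Y, IsLyndon l → StdFact l s r →
    Pi l = concP (Pi s) (Pi r) - concP (Pi r) (Pi s)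

/-! Since `⟨u ⧢_φ v, w⟩` is the coefficient of `(u, v)` in `Δ(w)`, a dual coproduct exists exactly
when, for every word `w`, only finitely many pairs `(u, v)` satisfy `⟨u ⧢_φ v, w⟩ ≠ 0`. For letters
this coefficient is `γ^z_{x,y}`, which gives necessity. Conversely, the recursion shows that
`⟨u ⧢_φ v, w⟩ ≠ 0` forces `|u|, |v| ≤ |w|` and every letter `x` of `u` and `v` to contribute to some
letter `z` of `w`: either `x = z` or `x` is a factor of a pair with `γ^z ≠ 0`. When these pairs are
finite in number, so are the letters contributing to the letters of `w`, hence so are the words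
`u`, `v`. -/

theorem Set.Finite.finite_lists_length_le {α : Type*} {s : Set α} (hs : s.Finite) (n : ℕ) :
    {l : List α | l.length ≤ n ∧ ∀ x ∈ l, x ∈ s}.Finite := by
  have := hs.to_subtype
  refine ((List.finite_length_le s n).image (List.map Subtype.val)).subset ?_
  rintro l ⟨hlen, hl⟩
  lift l to List s using hl
  exact ⟨l, by simpa using hlen, rfl⟩

section Covers

omit [Algebra ℚ K] [DecidableEq Y]

variable {φ : Y → Y → (Y →₀ K)}

def Contributes (φ : Y → Y → (Y →₀ K)) (x z : Y) : Prop :=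
  x = z ∨ ∃ y, φ x y z ≠ 0 ∨ φ y x z ≠ 0

def Covers (φ : Y → Y → (Y →₀ K)) (w u : List Y) : Prop :=
  u.length ≤ w.length ∧ ∀ x ∈ u, ∃ z ∈ w, Contributes φ x z

theorem finite_setOf_contributes (hφ : PhiDualizable φ) (z : Y) :
    {x | Contributes φ x z}.Finite := by
  refine (((Set.finite_singleton z).union ((hφ z).image Prod.fst)).union
    ((hφ z).image Prod.snd)).subset ?_
  rintro x (rfl | ⟨y, h | h⟩)
  · exact Or.inl (Or.inl rfl)
  · exact Or.inl (Or.inr ⟨(x, y), h, rfl⟩)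
  · exact Or.inr ⟨(y, x), h, rfl⟩

theorem finite_setOf_covers (hφ : PhiDualizable φ) (w : List Y) :
    {u | Covers φ w u}.Finite := by
  refine (((List.finite_toSet w).biUnion fun z _ => finite_setOf_contributes hφ z)
    |>.finite_lists_length_le w.length).subset ?_
  rintro u ⟨hlen, hu⟩
  refine ⟨hlen, fun x hx => ?_⟩
  obtain ⟨z, hz, hxz⟩ := hu x hx
  exact Set.mem_biUnion hz hxz

theorem covers_nil (w : List Y) : Covers φ w [] := ⟨Nat.zero_le _, by simp⟩

theorem covers_refl (w : List Y) : Covers φ w w := ⟨le_rfl, fun x hx => ⟨x, hx, Or.inl rfl⟩⟩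

theorem Covers.cons {w u : List Y} (h : Covers φ w u) (c : Y) : Covers φ (c :: w) u :=
  ⟨h.1.trans (Nat.le_succ _), fun x hx => (h.2 x hx).imp fun _ hz => ⟨.tail c hz.1, hz.2⟩⟩

theorem Covers.cons₂ {w u : List Y} {a c : Y} (h : Covers φ w u) (hac : Contributes φ a c) :
    Covers φ (c :: w) (a :: u) := by
  refine ⟨Nat.succ_le_succ h.1, fun x hx => ?_⟩
  rcases List.mem_cons.mp hx with rfl | hx
  · exact ⟨c, .head w, hac⟩
  · exact (h.cons c).2 x hx

end Covers

section Evaluation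

omit [Algebra ℚ K]

variable {φ : Y → Y → (Y →₀ K)} {m : (List Y →₀ K) →ₗ[K] (List Y →₀ K) →ₗ[K] (List Y →₀ K)}

omit [DecidableEq Y] in
theorem eq_of_word_apply_ne_zero {v w : List Y} (h : (word v : List Y →₀ K) w ≠ 0) : v = w := by
  by_contra hvw
  exact h (Finsupp.single_eq_of_ne' hvw)

theorem consL_apply_cons (a c : Y) (p : List Y →₀ K) (w : List Y) :
    consL a p (c :: w) = if c = a then p w else 0 := by
  split_ifs with h
  · subst h
    exact Finsupp.mapDomain_apply List.cons_injective p w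
  · exact Finsupp.mapDomain_of_notMem_range p _ (by rintro ⟨t, ht⟩; exact h (List.cons.inj ht).1.symm)

omit [DecidableEq Y] in
theorem consL_apply_nil (a : Y) (p : List Y →₀ K) : consL a p [] = 0 :=
  Finsupp.mapDomain_of_notMem_range p _ (by rintro ⟨t, ht⟩; exact List.cons_ne_nil a t ht)

theorem sum_smul_consL_apply_cons (f : Y →₀ K) (p : List Y →₀ K) (c : Y) (w : List Y) :
    (f.sum fun d k => k • consL d p) (c :: w) = f c * p w := by
  simp only [Finsupp.sum_apply, Finsupp.smul_apply, consL_apply_cons, smul_eq_mul, mul_ite, mul_zero]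
  rw [Finsupp.sum_ite_eq]
  split_ifs with h
  · rfl
  · rw [Finsupp.notMem_support_iff.mp h, zero_mul]

omit [DecidableEq Y] in
theorem IsPhiShuffle.apply_nil_of_cons_cons (hm : IsPhiShuffle φ m) (a b : Y) (u v : List Y) :
    m (word (a :: u)) (word (b :: v)) [] = 0 := by
  simp only [hm.2.2, Finsupp.add_apply, Finsupp.sum_apply, Finsupp.smul_apply, consL_apply_nil]
  simp

theorem IsPhiShuffle.apply_cons_of_cons_cons (hm : IsPhiShuffle φ m) (a b c : Y) (u v w : List Y) :
    m (word (a :: u)) (word (b :: v)) (c :: w) =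
      (if c = a then m (word u) (word (b :: v)) w else 0) +
      (if c = b then m (word (a :: u)) (word v) w else 0) + φ a b c * m (word u) (word v) w := by
  rw [hm.2.2, Finsupp.add_apply, Finsupp.add_apply, consL_apply_cons, consL_apply_cons,
    sum_smul_consL_apply_cons]

theorem IsPhiShuffle.apply_singleton (hm : IsPhiShuffle φ m) (x y z : Y) :
    m (word [x]) (word [y]) [z] = φ x y z := by
  rw [hm.apply_cons_of_cons_cons, hm.1, hm.2.1, hm.1]
  simp [word]

theorem IsPhiShuffle.covers_of_apply_ne_zero (hm : IsPhiShuffle φ m) :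
    ∀ {u v w : List Y}, m (word u) (word v) w ≠ 0 → Covers φ w u ∧ Covers φ w v
  | [], v, w, h => by
    obtain rfl := eq_of_word_apply_ne_zero (hm.1 v ▸ h)
    exact ⟨covers_nil v, covers_refl v⟩
  | a :: u, [], w, h => by
    obtain rfl := eq_of_word_apply_ne_zero (hm.2.1 _ ▸ h)
    exact ⟨covers_refl _, covers_nil _⟩
  | a :: u, b :: v, [], h => absurd (hm.apply_nil_of_cons_cons a b u v) h
  | a :: u, b :: v, c :: w, h => by
    rw [hm.apply_cons_of_cons_cons] at h
    obtain ⟨rfl, hne⟩ | ⟨rfl, hne⟩ | ⟨hφ, hne⟩ :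
        (c = a ∧ m (word u) (word (b :: v)) w ≠ 0) ∨ (c = b ∧ m (word (a :: u)) (word v) w ≠ 0) ∨
          (φ a b c ≠ 0 ∧ m (word u) (word v) w ≠ 0) := by
      by_contra! hc
      obtain ⟨ha, hb, hab⟩ := hc
      refine h ?_
      rw [ite_eq_right_iff.mpr ha, ite_eq_right_iff.mpr hb, zero_add, zero_add]
      by_cases hφ : φ a b c = 0
      · rw [hφ, zero_mul]
      · rw [hab hφ, mul_zero]
    · obtain ⟨hu, hv⟩ := hm.covers_of_apply_ne_zero hne
      exact ⟨hu.cons₂ (Or.inl rfl), hv.cons c⟩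
    · obtain ⟨hu, hv⟩ := hm.covers_of_apply_ne_zero hne
      exact ⟨hu.cons c, hv.cons₂ (Or.inl rfl)⟩
    · obtain ⟨hu, hv⟩ := hm.covers_of_apply_ne_zero hne
      exact ⟨hu.cons₂ (Or.inr ⟨b, Or.inl hφ⟩), hv.cons₂ (Or.inr ⟨a, Or.inr hφ⟩)⟩

end Evaluation

omit [Algebra ℚ K] [DecidableEq Y] in
theorem exists_isDualWitness_iff (m : (List Y →₀ K) →ₗ[K] (List Y →₀ K) →ₗ[K] (List Y →₀ K)) :
    (∃ Δfn : List Y → (List Y × List Y →₀ K), IsDualWitness m Δfn) ↔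
      ∀ w : List Y, {q : List Y × List Y | m (word q.1) (word q.2) w ≠ 0}.Finite := by
  constructor
  · rintro ⟨Δfn, hΔ⟩ w
    refine (Δfn w).support.finite_toSet.subset fun ⟨u, v⟩ huv => ?_
    rw [Finset.mem_coe, Finsupp.mem_support_iff, ← hΔ]
    exact huv
  · intro h
    exact ⟨fun w => Finsupp.ofSupportFinite _ (h w), fun u v w => rfl⟩

/-- the `φ`-shuffle is dualizable iff for every letter `z` the set
`{(x,y) : γ^z_{x,y} ≠ 0}` is finite. -/
theorem phiShuffle_dualizable_iff (φ : Y → Y → (Y →₀ K))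
    (m : (List Y →₀ K) →ₗ[K] (List Y →₀ K) →ₗ[K] (List Y →₀ K))
    (hm : IsPhiShuffle φ m) :
    (∃ Δfn : List Y → (List Y × List Y →₀ K), IsDualWitness m Δfn) ↔
      PhiDualizable φ := by
  rw [exists_isDualWitness_iff]
  constructor
  · intro h z
    have hinj : Function.Injective fun p : Y × Y => ([p.1], [p.2]) := fun p q hpq => by
      simpa [Prod.ext_iff] using hpq
    refine ((h [z]).preimage hinj.injOn).subset fun p hp => ?_
    simpa [hm.apply_singleton] using hp
  · intro hφ w
    refine ((finite_setOf_covers hφ w).prod (finite_setOf_covers hφ w)).subset fun q hq => ?_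
    exact hm.covers_of_apply_ne_zero hq
end
end

section
/- If φ is associative and the bialgebra B_φ = (K⟨Y⟩, conc, 1, Δ_{⧢_φ}, ε) is an enveloping bialgebra (isomorphic to the enveloping algebra of its primitives), then φ is moderate, i.e., for every letter y ∈ Y the set {w ∈ Y^+ : ⟨y, φ(w)⟩ ≠ 0} is finite. -/
noncomputable section

open Finsupp

attribute [local instance 100] LieRing.ofAssociativeRing

variable {K : Type*} [CommRing K] [Algebra ℚ K]
variable {Y : Type*} [DecidableEq Y]

/-- Primitivity for `Δ_{⧢_φ}` of an element of the concatenation algebra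
`K⟨Y⟩ = MonoidAlgebra K (FreeMonoid Y)`, expressed through the duality
`⟨Δ_{⧢_φ}(p), u ⊗ v⟩ = ⟨p, u ⧢_φ v⟩`. -/
def PrimMA (m : (List Y →₀ K) →ₗ[K] (List Y →₀ K) →ₗ[K] (List Y →₀ K))
    (p : MonoidAlgebra K (FreeMonoid Y)) : Prop :=
  ∀ u v : List Y,
    ((m (word u) (word v)).sum fun w a => a * p.coeff (FreeMonoid.ofList w)) =
      (if v = [] then p.coeff (FreeMonoid.ofList u) else 0) +
      (if u = [] then p.coeff (FreeMonoid.ofList v) else 0)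

/-!
Write `⧢ w` for the `φ`-shuffle `x₁ ⧢ ⋯ ⧢ xₙ` of the letters of a word `w = x₁ ⋯ xₙ`. Shuffling
with a single letter is a coderivation of deconcatenation, so the coefficient of `s t` in `⧢ w` is
`Σ ⟨⧢ w₁, s⟩ ⟨⧢ w₂, t⟩` over the splittings of `w` into complementary subwords `w₁, w₂`; dually,
`⟨p q, ⧢ w⟩ = Σ ⟨p, ⧢ w₁⟩ ⟨q, ⧢ w₂⟩`. Hence the `p ∈ K⟨Y⟩` with `⟨p, ⧢ w⟩ = 0` for all long
enough `w` form a subalgebra. It contains the primitive elements, for which this already holds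
when `|w| ≥ 2`, so if `B_φ` is enveloping it contains every letter `y`. Since
`⟨y, ⧢ w⟩ = ⟨y, φ(w)⟩`, the words `w` with `⟨y, φ(w)⟩ ≠ 0` have bounded length, and dualizability
leaves finitely many of each length.
-/

theorem UniversalEnvelopingAlgebra.lift_apply_mem {R L A : Type*} [CommRing R] [LieRing L]
    [LieAlgebra R L] [Ring A] [Algebra R A] {S : Subalgebra R A} {f : L →ₗ⁅R⁆ A}
    (hf : ∀ x, f x ∈ S) (u : UniversalEnvelopingAlgebra R L) : lift R f u ∈ S := by
  obtain ⟨t, rfl⟩ : ∃ t, mkAlgHom R L t = u := RingCon.mkₐ_surjective _ u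
  induction t using TensorAlgebra.induction with
  | algebraMap r => simp
  | ι x => simpa using hf x
  | mul a b ha hb => simpa using S.mul_mem ha hb
  | add a b ha hb => simpa using S.add_mem ha hb

theorem Finsupp.list_sum_apply {ι M : Type*} [AddCommMonoid M] (L : List (ι →₀ M)) (i : ι) :
    L.sum i = (L.map fun f => f i).sum :=
  map_list_sum (Finsupp.applyAddHom i) L

section Quotients

variable {R : Type*} [CommRing R] {α : Type*}

theorem word_apply [DecidableEq α] (v w : List α) :
    (word v : List α →₀ R) w = if v = w then 1 else 0 :=
  Finsupp.single_apply

theorem linearMap_ext_word {M : Type*} [AddCommMonoid M] [Module R M]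
    {f g : (List α →₀ R) →ₗ[R] M} (h : ∀ v : List α, f (word v) = g (word v)) : f = g :=
  Finsupp.lhom_ext' fun v => LinearMap.ext_ring (h v)

def leftQuot (s : List α) : (List α →₀ R) →ₗ[R] (List α →₀ R) :=
  Finsupp.lcomapDomain (s ++ ·) (List.append_right_injective s)

def rightQuot (t : List α) : (List α →₀ R) →ₗ[R] (List α →₀ R) :=
  Finsupp.lcomapDomain (· ++ t) (List.append_left_injective t)

def headCoeffs (r : List α) : (List α →₀ R) →ₗ[R] (α →₀ R) :=
  Finsupp.lcomapDomain (· :: r) fun _ _ h => (List.cons_eq_cons.1 h).1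

@[simp]
theorem leftQuot_apply (s t : List α) (P : List α →₀ R) : leftQuot s P t = P (s ++ t) := rfl

@[simp]
theorem rightQuot_apply (s t : List α) (P : List α →₀ R) : rightQuot t P s = P (s ++ t) := rfl

@[simp]
theorem headCoeffs_apply (r : List α) (P : List α →₀ R) (b : α) :
    headCoeffs r P b = P (b :: r) := rfl

theorem leftQuot_nil (P : List α →₀ R) : leftQuot [] P = P := by
  ext t; simp

theorem leftQuot_cons (z : α) (s : List α) (P : List α →₀ R) :
    leftQuot (z :: s) P = leftQuot s (leftQuot [z] P) := by
  ext t; simp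

theorem rightQuot_leftQuot (s t : List α) (P : List α →₀ R) :
    rightQuot t (leftQuot s P) = leftQuot s (rightQuot t P) := by
  ext r; simp [List.append_assoc]

theorem headCoeffs_rightQuot (r t : List α) (P : List α →₀ R) :
    headCoeffs r (rightQuot t P) = headCoeffs (r ++ t) P := by
  ext b; simp

theorem headCoeffs_word_nil (r : List α) : headCoeffs r (word [] : List α →₀ R) = 0 := by
  ext; simp [word]

theorem consL_apply_nil_s5 (a : α) (P : List α →₀ R) : consL a P [] = 0 :=
  Finsupp.mapDomain_of_notMem_range _ _ fun ⟨_, h⟩ => List.cons_ne_nil _ _ h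

theorem consL_apply_cons_s5 [DecidableEq α] (a z : α) (P : List α →₀ R) (r : List α) :
    consL a P (z :: r) = if a = z then P r else 0 := by
  split_ifs with h
  · subst h
    exact Finsupp.mapDomain_apply List.cons_injective P r
  · exact Finsupp.mapDomain_of_notMem_range _ _ fun ⟨_, hr⟩ => h (List.cons_eq_cons.1 hr).1

theorem sum_smul_consL_apply_nil (f : α →₀ R) (P : List α →₀ R) :
    (f.sum fun c k => k • consL c P) [] = 0 := by
  simp [Finsupp.sum_apply, consL_apply_nil_s5]

theorem sum_smul_consL_apply_cons_s5 [DecidableEq α] (f : α →₀ R) (P : List α →₀ R) (z : α)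
    (r : List α) : (f.sum fun c k => k • consL c P) (z :: r) = f z * P r := by
  simp only [Finsupp.sum_apply, Finsupp.smul_apply, consL_apply_cons_s5, smul_eq_mul, mul_ite,
    mul_zero, Finsupp.sum_ite_eq']
  split_ifs with h
  · rfl
  · rw [Finsupp.notMem_support_iff.1 h, zero_mul]

end Quotients

section LetterShuffle

variable {R : Type*} [CommRing R] {α : Type*}
  {φ : α → α → (α →₀ R)} {m : (List α →₀ R) →ₗ[R] (List α →₀ R) →ₗ[R] (List α →₀ R)}

theorem IsPhiShuffle.letter_apply_nil (hm : IsPhiShuffle φ m) (x : α) (P : List α →₀ R) :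
    m (word [x]) P [] = 0 := by
  classical
  suffices (Finsupp.lapply []).comp (m (word [x])) = 0 from LinearMap.congr_fun this P
  refine linearMap_ext_word fun v => ?_
  cases v with
  | nil => simp [hm.2.1, word_apply]
  | cons b V =>
    rw [LinearMap.comp_apply, Finsupp.lapply_apply, hm.2.2, Finsupp.add_apply, Finsupp.add_apply,
      consL_apply_nil_s5, consL_apply_nil_s5, sum_smul_consL_apply_nil, add_zero, add_zero,
      LinearMap.zero_apply]

theorem IsPhiShuffle.letter_apply_cons [DecidableEq α] (hm : IsPhiShuffle φ m) (x z : α)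
    (P : List α →₀ R) (r : List α) :
    m (word [x]) P (z :: r) = (if x = z then P r else 0) + m (word [x]) (leftQuot [z] P) r +
      Finsupp.linearCombination R (fun b => φ x b z) (headCoeffs r P) := by
  suffices (Finsupp.lapply (z :: r)).comp (m (word [x])) =
      (if x = z then Finsupp.lapply r else 0) +
        ((Finsupp.lapply r).comp (m (word [x]))).comp (leftQuot [z]) +
        (Finsupp.linearCombination R (fun b => φ x b z)).comp (headCoeffs r) by
    simpa [apply_ite (fun f : (List α →₀ R) →ₗ[R] R => f P)] using LinearMap.congr_fun this P
  refine linearMap_ext_word fun v => ?_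
  simp only [LinearMap.coe_comp, Function.comp_apply, Finsupp.lapply_apply, LinearMap.add_apply]
  cases v with
  | nil =>
    have hquot : leftQuot [z] (word [] : List α →₀ R) = 0 := by ext; simp [word_apply]
    rw [hm.2.1, hquot, headCoeffs_word_nil, map_zero, map_zero]
    split_ifs <;> simp_all [word_apply, eq_comm]
  | cons b V =>
    have hquot : leftQuot [z] (word (b :: V) : List α →₀ R) = if b = z then word V else 0 := by
      ext; split_ifs <;> simp_all [word_apply]
    have hhead : headCoeffs r (word (b :: V) : List α →₀ R) =
        if V = r then Finsupp.single b 1 else 0 := by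
      ext; split_ifs <;> simp_all [word_apply, Finsupp.single_apply]
    rw [hm.2.2, hm.1, hm.1, Finsupp.add_apply, Finsupp.add_apply, consL_apply_cons_s5,
      consL_apply_cons_s5, sum_smul_consL_apply_cons_s5, hquot, hhead]
    clear hquot hhead
    split_ifs <;> simp_all [word_apply, eq_comm]

theorem IsPhiShuffle.letter_apply_append (hm : IsPhiShuffle φ m) (x : α) (s t : List α)
    (P : List α →₀ R) :
    m (word [x]) P (s ++ t) = m (word [x]) (leftQuot s P) t + m (word [x]) (rightQuot t P) s := by
  classical
  induction s generalizing P with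
  | nil => rw [List.nil_append, leftQuot_nil, hm.letter_apply_nil, add_zero]
  | cons z s ih =>
    rw [List.cons_append, hm.letter_apply_cons, ih, leftQuot_cons z s P,
      hm.letter_apply_cons x z (rightQuot t P) s, rightQuot_leftQuot, headCoeffs_rightQuot,
      rightQuot_apply]
    ring

def shuffleLetters (m : (List α →₀ R) →ₗ[R] (List α →₀ R) →ₗ[R] (List α →₀ R)) (w : List α) :
    List α →₀ R :=
  prodM m (w.map fun x => word [x])

theorem shuffleLetters_nil : shuffleLetters m [] = word [] := rfl

theorem shuffleLetters_cons (x : α) (w : List α) :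
    shuffleLetters m (x :: w) = m (word [x]) (shuffleLetters m w) := rfl

theorem IsPhiShuffle.shuffleLetters_apply_nil (hm : IsPhiShuffle φ m) {w : List α}
    (hw : w ≠ []) : shuffleLetters m w [] = 0 := by
  obtain ⟨x, w, rfl⟩ := List.exists_cons_of_ne_nil hw
  exact hm.letter_apply_nil x _

def subwordSplits : List α → List (List α × List α)
  | [] => [([], [])]
  | x :: w => (subwordSplits w).flatMap fun p => [(x :: p.1, p.2), (p.1, x :: p.2)]

theorem length_add_length_of_mem_subwordSplits {w : List α} {p : List α × List α}
    (hp : p ∈ subwordSplits w) : p.1.length + p.2.length = w.length := by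
  induction w generalizing p with
  | nil => simp_all [subwordSplits]
  | cons x w ih =>
    simp only [subwordSplits, List.mem_flatMap, List.mem_cons, List.not_mem_nil, or_false] at hp
    obtain ⟨q, hq, rfl | rfl⟩ := hp <;> simp [← ih hq] <;> omega

theorem IsPhiShuffle.shuffleLetters_apply_append (hm : IsPhiShuffle φ m) (w s t : List α) :
    shuffleLetters m w (s ++ t) =
      ((subwordSplits w).map fun p => shuffleLetters m p.1 s * shuffleLetters m p.2 t).sum := by
  classical
  induction w generalizing s t with
  | nil =>
    simp only [shuffleLetters_nil, subwordSplits, word_apply, List.map_cons, List.map_nil,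
      List.sum_cons, List.sum_nil, add_zero, eq_comm (a := []), List.append_eq_nil_iff]
    split_ifs <;> simp_all
  | cons x w ih =>
    have hleft : leftQuot s (shuffleLetters m w) =
        ((subwordSplits w).map fun p => shuffleLetters m p.1 s • shuffleLetters m p.2).sum := by
      ext r; simp [ih, Finsupp.list_sum_apply, Function.comp_def]
    have hright : rightQuot t (shuffleLetters m w) =
        ((subwordSplits w).map fun p => shuffleLetters m p.2 t • shuffleLetters m p.1).sum := by
      ext r; simp [ih, Finsupp.list_sum_apply, Function.comp_def, mul_comm]
    rw [shuffleLetters_cons, hm.letter_apply_append, hleft, hright, map_list_sum, map_list_sum,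
      Finsupp.list_sum_apply, Finsupp.list_sum_apply]
    simp only [subwordSplits, List.flatMap_def, List.map_flatten, List.map_map, List.sum_flatten,
      Function.comp_def, List.map_cons, List.map_nil, List.sum_cons, List.sum_nil, add_zero,
      List.sum_map_add, shuffleLetters_cons, map_smul, Finsupp.smul_apply, smul_eq_mul]
    rw [add_comm]
    simp only [mul_comm]

theorem IsPhiShuffle.headCoeffs_nil_letter (hm : IsPhiShuffle φ m) (x : α) (P : List α →₀ R) :
    headCoeffs [] (m (word [x]) P) =
      P [] • Finsupp.single x 1 + Finsupp.linearCombination R (φ x) (headCoeffs [] P) := by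
  classical
  ext z
  rw [headCoeffs_apply, hm.letter_apply_cons, hm.letter_apply_nil, add_zero, Finsupp.add_apply,
    Finsupp.smul_apply, Finsupp.linearCombination_apply, Finsupp.linearCombination_apply,
    Finsupp.sum_apply]
  simp [Finsupp.single_apply]

theorem IsPhiShuffle.headCoeffs_nil_shuffleLetters (hm : IsPhiShuffle φ m) {w : List α}
    (hw : w ≠ []) : headCoeffs [] (shuffleLetters m w) = phiWord φ w := by
  induction w with
  | nil => exact absurd rfl hw
  | cons x w ih =>
    rw [shuffleLetters_cons, hm.headCoeffs_nil_letter]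
    cases w with
    | nil =>
      rw [shuffleLetters_nil, headCoeffs_word_nil, map_zero, add_zero]
      simp [word, phiWord]
    | cons y w =>
      rw [hm.shuffleLetters_apply_nil (List.cons_ne_nil y w), zero_smul, zero_add,
        ih (List.cons_ne_nil y w), phiWord, Finsupp.linearCombination_apply]

end LetterShuffle

section Pairing

variable {R : Type*} [CommRing R] {α : Type*}
  {φ : α → α → (α →₀ R)} {m : (List α →₀ R) →ₗ[R] (List α →₀ R) →ₗ[R] (List α →₀ R)}

def pairing (p : MonoidAlgebra R (FreeMonoid α)) : (List α →₀ R) →ₗ[R] R :=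
  Finsupp.linearCombination R fun w => p.coeff (FreeMonoid.ofList w)

theorem pairing_word (p : MonoidAlgebra R (FreeMonoid α)) (w : List α) :
    pairing p (word w) = p.coeff (FreeMonoid.ofList w) := by
  rw [pairing, word, Finsupp.linearCombination_single, one_smul]

theorem pairing_zero : pairing (0 : MonoidAlgebra R (FreeMonoid α)) = 0 :=
  linearMap_ext_word fun w => by simp [pairing_word]

theorem pairing_add (p q : MonoidAlgebra R (FreeMonoid α)) :
    pairing (p + q) = pairing p + pairing q :=
  linearMap_ext_word fun w => by simp [pairing_word]

theorem pairing_single (g : FreeMonoid α) (c : R) (P : List α →₀ R) :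
    pairing (MonoidAlgebra.single g c) P = c * P g.toList := by
  classical
  suffices pairing (MonoidAlgebra.single g c) = c • Finsupp.lapply g.toList from
    LinearMap.congr_fun this P
  obtain ⟨u, rfl⟩ := FreeMonoid.ofList.surjective g
  refine linearMap_ext_word fun w => ?_
  simp only [pairing_word, MonoidAlgebra.coeff_single, LinearMap.smul_apply, Finsupp.lapply_apply,
    FreeMonoid.toList_ofList, word_apply, smul_eq_mul, mul_ite, mul_one, mul_zero]
  split_ifs with h
  · rw [h, Finsupp.single_eq_same]
  · exact Finsupp.single_eq_of_ne fun h' => h (FreeMonoid.ofList.injective h')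

theorem IsPhiShuffle.pairing_mul_shuffleLetters (hm : IsPhiShuffle φ m)
    (p q : MonoidAlgebra R (FreeMonoid α)) (w : List α) :
    pairing (p * q) (shuffleLetters m w) = ((subwordSplits w).map fun s =>
      pairing p (shuffleLetters m s.1) * pairing q (shuffleLetters m s.2)).sum := by
  induction p using MonoidAlgebra.induction_linear with
  | zero => simp [pairing_zero]
  | add p p' hp hp' => simp [add_mul, pairing_add, hp, hp', List.sum_map_add]
  | single g c =>
    induction q using MonoidAlgebra.induction_linear with
    | zero => simp [pairing_zero]
    | add q q' hq hq' => simp [mul_add, pairing_add, hq, hq', List.sum_map_add]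
    | single h d =>
      simp only [MonoidAlgebra.single_mul_single, pairing_single, FreeMonoid.toList_mul,
        hm.shuffleLetters_apply_append]
      rw [← List.sum_map_mul_left]
      exact congrArg List.sum (List.map_congr_left fun _ _ => by ring)

def IsPhiShuffle.vanishingSubalgebra (hm : IsPhiShuffle φ m) :
    Subalgebra R (MonoidAlgebra R (FreeMonoid α)) where
  carrier := {p | ∃ N : ℕ, ∀ w : List α, N < w.length → pairing p (shuffleLetters m w) = 0}
  mul_mem' := by
    rintro p q ⟨M, hM⟩ ⟨N, hN⟩
    refine ⟨M + N, fun w hw => ?_⟩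
    rw [hm.pairing_mul_shuffleLetters]
    refine List.sum_eq_zero fun x hx => ?_
    obtain ⟨s, hs, rfl⟩ := List.mem_map.1 hx
    have := length_add_length_of_mem_subwordSplits hs
    by_cases h : M < s.1.length
    · rw [hM _ h, zero_mul]
    · rw [hN _ (by omega), mul_zero]
  add_mem' := by
    rintro p q ⟨M, hM⟩ ⟨N, hN⟩
    refine ⟨max M N, fun w hw => ?_⟩
    rw [pairing_add, LinearMap.add_apply, hM w (by omega), hN w (by omega), add_zero]
  algebraMap_mem' r := ⟨0, fun w hw => by
    rw [MonoidAlgebra.coe_algebraMap, Function.comp_apply, pairing_single, FreeMonoid.toList_one,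
      hm.shuffleLetters_apply_nil (List.ne_nil_of_length_pos hw), mul_zero]⟩

theorem IsPhiShuffle.mem_vanishingSubalgebra_of_primMA (hm : IsPhiShuffle φ m)
    {p : MonoidAlgebra R (FreeMonoid α)} (hp : PrimMA m p) : p ∈ hm.vanishingSubalgebra := by
  classical
  have hletter (x : α) :
      (pairing p).comp (m (word [x])) = p.coeff (FreeMonoid.ofList [x]) • Finsupp.lapply [] :=
    linearMap_ext_word fun v => by
      simpa [pairing, Finsupp.linearCombination_apply, word_apply, eq_comm] using hp [x] v
  refine ⟨1, fun w hw => ?_⟩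
  obtain ⟨x, w, rfl⟩ :=
    List.exists_cons_of_ne_nil (List.ne_nil_of_length_pos (Nat.zero_lt_of_lt hw))
  have hw' : w ≠ [] := List.ne_nil_of_length_pos (by simpa using hw)
  simpa [shuffleLetters_cons, hm.shuffleLetters_apply_nil hw'] using
    LinearMap.congr_fun (hletter x) (shuffleLetters m w)

end Pairing
section Moderate

variable {R : Type*} [CommRing R] {α : Type*} {φ : α → α → (α →₀ R)}

theorem finite_setOf_length_eq_phiWord_ne_zero (hdual : PhiDualizable φ) :
    ∀ (n : ℕ) (z : α), {w : List α | w.length = n ∧ phiWord φ w z ≠ 0}.Finite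
  | 0, z => Set.finite_empty.subset fun w ⟨hw, h⟩ => by
    simp_all [List.length_eq_zero_iff, phiWord]
  | 1, z => (Set.finite_singleton [z]).subset fun w ⟨hw, h⟩ => by
    obtain ⟨b, rfl⟩ := List.length_eq_one_iff.1 hw
    by_contra hbz
    simp_all [phiWord]
  | n + 2, z => by
    refine ((hdual z).biUnion fun p _ =>
      (finite_setOf_length_eq_phiWord_ne_zero hdual (n + 1) p.2).image (List.cons p.1)).subset ?_
    rintro (_ | ⟨x, _ | ⟨y, w⟩⟩) ⟨hlen, hw⟩
    · simp at hlen
    · simp at hlen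
    rw [phiWord, Finsupp.sum_apply] at hw
    obtain ⟨b, -, hb⟩ := Finset.exists_ne_zero_of_sum_ne_zero hw
    simp only [Finsupp.smul_apply, smul_eq_mul] at hb
    exact Set.mem_biUnion (x := (x, b)) (right_ne_zero_of_mul hb)
      ⟨y :: w, ⟨by simpa using hlen, left_ne_zero_of_mul hb⟩, rfl⟩

theorem phiModerate_of_eventually_eq_zero (hdual : PhiDualizable φ)
    (h : ∀ y : α, ∃ N : ℕ, ∀ w : List α, N < w.length → phiWord φ w y = 0) : PhiModerate φ := by
  intro y
  obtain ⟨N, hN⟩ := h y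
  refine ((Set.finite_Iic N).biUnion fun n _ =>
    finite_setOf_length_eq_phiWord_ne_zero hdual n y).subset fun w ⟨_, hw⟩ => ?_
  exact Set.mem_biUnion (x := w.length) (not_lt.1 (mt (hN w) hw)) ⟨rfl, hw⟩

end Moderate

theorem enveloping_implies_moderate_general (φ : Y → Y → (Y →₀ K))
    (m : (List Y →₀ K) →ₗ[K] (List Y →₀ K) →ₗ[K] (List Y →₀ K))
    (hm : IsPhiShuffle φ m)
    (hdual : PhiDualizable φ)
    (L : LieSubalgebra K (MonoidAlgebra K (FreeMonoid Y)))
    (hL : (L : Set (MonoidAlgebra K (FreeMonoid Y))) = {p | PrimMA m p})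
    (henv : Function.Bijective ⇑(UniversalEnvelopingAlgebra.lift K L.incl)) :
    PhiModerate φ := by
  refine phiModerate_of_eventually_eq_zero hdual fun y => ?_
  have hprim (x : L) : L.incl x ∈ hm.vanishingSubalgebra :=
    hm.mem_vanishingSubalgebra_of_primMA (hL.subset x.2)
  obtain ⟨u, hu⟩ := henv.2 (MonoidAlgebra.single (FreeMonoid.ofList [y]) 1)
  obtain ⟨N, hN⟩ := hu ▸ UniversalEnvelopingAlgebra.lift_apply_mem hprim u
  refine ⟨N, fun w hw => ?_⟩
  rw [← hm.headCoeffs_nil_shuffleLetters (List.ne_nil_of_length_pos (Nat.zero_lt_of_lt hw)),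
    headCoeffs_apply, ← one_mul (shuffleLetters m w [y]), ← FreeMonoid.toList_ofList [y],
    ← pairing_single]
  exact hN w hw

/-- if `φ` is associative (and commutative, dualizable) and the
bialgebra `B_φ` is an enveloping bialgebra — i.e. the canonical morphism from the
universal enveloping algebra of its Lie algebra of primitive elements is
bijective — then `φ` is moderate. -/
theorem enveloping_implies_moderate (φ : Y → Y → (Y →₀ K))
    (m : (List Y →₀ K) →ₗ[K] (List Y →₀ K) →ₗ[K] (List Y →₀ K))
    (hm : IsPhiShuffle φ m)
    (hassoc : PhiAssoc φ) (hcomm : PhiComm φ) (hdual : PhiDualizable φ)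
    (L : LieSubalgebra K (MonoidAlgebra K (FreeMonoid Y)))
    (hL : (L : Set (MonoidAlgebra K (FreeMonoid Y))) = {p | PrimMA m p})
    (henv : Function.Bijective ⇑(UniversalEnvelopingAlgebra.lift K L.incl)) :
    PhiModerate φ :=
  enveloping_implies_moderate_general φ m hm hdual L hL henv

end
end
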